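/- arXiv:math/9903104 — 4 statements merged into one kernel-verified Lean document; each statement's English description precedes it below -/
import Mathlib

section
/- Let R be a fusion ring with finite basis {ρ_0 = 1, ρ_1, …, ρ_m} closed under conjugation ρ ↦ ρ̄, with nonnegative integer structure constants N_{ij}^k (so ρ_i ρ_j = Σ_k N_{ij}^k ρ_k), satisfying Frobenius reciprocity N_{i_1…i_n}^0 = N_{i_1…i_{n-1}}^{\bar{i_n}} (where N_{i_1…i_n}^0 denotes the multiplicity of the unit in ρ_{i_1}⋯ρ_{i_n}), and admitting a dimension function d: {ρ_i} → ℝ_{>0} with d(ρ_i)d(ρ_j) = Σ_k N_{ij}^k d(ρ_k), d(ρ̄_i) = d(ρ_i), and d(ρ_0) = 1. Then for every n ≥ 1: Σ_{i_1,…,i_n} N_{i_1…i_n}^0 · d(ρ_{i_1})⋯d(ρ_{i_n}) = (Σ_i d(ρ_i)²)^{n-1}. -/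
open Finset

/-- Multiplicity of `ρ_k` in the product `ρ_{i₁} ⋯ ρ_{i_n}` of basis elements of a fusion ring
with structure constants `N` and unit index `zero`. -/
def Nlist {ι : Type*} [Fintype ι] [DecidableEq ι] (N : ι → ι → ι → ℕ) (zero : ι) :
    List ι → ι → ℕ
  | [], k => if k = zero then 1 else 0
  | (i :: l), k => ∑ j, Nlist N zero l j * N i j k

/-- In a fusion ring with finite basis `{ρ_0 = 1, ρ_1, …, ρ_m}` closed under
conjugation, with nonnegative integer structure constants `N_{ij}^k`, Frobenius reciprocity
`N_{i₁…i_n}^0 = N_{i₁…i_{n-1}}^{\bar i_n}`, and a positive dimension function `d`, one has for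
every `n ≥ 1`:
`Σ_{i₁,…,i_n} N_{i₁…i_n}^0 · d(ρ_{i₁})⋯d(ρ_{i_n}) = (Σ_i d(ρ_i)²)^{n-1}`. -/
theorem fusion_ring_global_index_power
    {ι : Type*} [Fintype ι] [DecidableEq ι]
    (N : ι → ι → ι → ℕ) (zero : ι) (bar : ι → ι) (d : ι → ℝ)
    (hbar : Function.Involutive bar)
    (hN0 : ∀ i j, N i j zero = if j = bar i then 1 else 0)
    (hid_l : ∀ i k, N zero i k = if k = i then 1 else 0)
    (hid_r : ∀ i k, N i zero k = if k = i then 1 else 0)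
    (hassoc : ∀ i j k l, ∑ p, N i j p * N p k l = ∑ q, N j k q * N i q l)
    (hdpos : ∀ i, 0 < d i)
    (hd0 : d zero = 1)
    (hdbar : ∀ i, d (bar i) = d i)
    (hdmul : ∀ i j, d i * d j = ∑ k, (N i j k : ℝ) * d k)
    (hfrob : ∀ (l : List ι) (i : ι),
      Nlist N zero (l ++ [i]) zero = Nlist N zero l (bar i)) :
    ∀ n : ℕ, 1 ≤ n →
      ∑ f : Fin n → ι, (Nlist N zero (List.ofFn f) zero : ℝ) * ∏ j, d (f j)
        = (∑ i, d i ^ 2) ^ (n - 1) := by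
  classical
  -- Nlist of singleton
  have hsing : ∀ c p, Nlist N zero [c] p = if p = c then 1 else 0 := by
    intro c p
    rw [show Nlist N zero [c] p = ∑ j, Nlist N zero [] j * N c j p from rfl]
    simp [Nlist, hid_r c p]
  have hpair : ∀ a b k, Nlist N zero [a, b] k = N a b k := by
    intro a b k
    rw [show Nlist N zero [a, b] k = ∑ j, Nlist N zero [b] j * N a j k from rfl]
    simp [hsing]
  -- cyclic identity
  have hcyc : ∀ a b c, N a b (bar c) = N b c (bar a) := by
    intro a b c
    have h := hfrob [a, b] c
    rw [show ([a,b] ++ [c] : List ι) = [a,b,c] from rfl, hpair] at h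
    rw [← h]
    rw [show Nlist N zero [a, b, c] zero = ∑ j, Nlist N zero [b, c] j * N a j zero from rfl]
    simp [hpair, hN0]
  have hswap : ∀ i j k, N i j k = N (bar k) i (bar j) := by
    intro i j k
    have := hcyc (bar k) i j
    rw [hbar] at this
    exact this.symm
  -- key identity
  have hkey : ∀ i k, ∑ j, (N i j k : ℝ) * d j = d i * d k := by
    intro i k
    have : ∑ j, (N i j k : ℝ) * d j = ∑ j, (N (bar k) i (bar j) : ℝ) * d j := by
      refine Finset.sum_congr rfl fun j _ => by rw [← hswap]
    rw [this]
    have hre : ∑ j, (N (bar k) i (bar j) : ℝ) * d j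
        = ∑ j, (N (bar k) i j : ℝ) * d j := by
      refine Fintype.sum_bijective bar hbar.bijective _ _ fun j => ?_
      rw [hdbar j]
    rw [hre, ← hdmul, hdbar, mul_comm]
  -- main induction
  have main : ∀ n : ℕ, ∀ k, ∑ f : Fin (n+1) → ι,
      (Nlist N zero (List.ofFn f) k : ℝ) * ∏ j, d (f j)
        = (∑ i, d i ^ 2) ^ n * d k := by
    intro n
    induction n with
    | zero =>
      intro k
      simp only [pow_zero, one_mul]
      have : ∀ f : Fin 1 → ι, (Nlist N zero (List.ofFn f) k : ℝ) * ∏ j, d (f j)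
          = (if k = f 0 then 1 else 0) * d (f 0) := by
        intro f
        rw [show List.ofFn f = [f 0] from by simp [List.ofFn_succ], hsing]
        simp
      rw [Finset.sum_congr rfl fun f _ => this f]
      rw [← (Equiv.funUnique (Fin 1) ι).symm.sum_comp]
      simp [Equiv.funUnique]
    | succ n ih =>
      intro k
      rw [← (Fin.consEquiv (fun _ : Fin (n+2) => ι)).sum_comp]
      rw [Fintype.sum_prod_type]
      have step : ∀ (i : ι) (g : Fin (n+1) → ι),
          (Nlist N zero (List.ofFn (Fin.consEquiv (fun _ : Fin (n+2) => ι) (i, g))) k : ℝ) *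
            ∏ j, d ((Fin.consEquiv (fun _ : Fin (n+2) => ι) (i, g)) j)
          = ∑ j, ((Nlist N zero (List.ofFn g) j : ℝ) * ∏ t, d (g t)) * ((N i j k : ℝ) * d i) := by
        intro i g
        have h1 : List.ofFn (Fin.cons i g : Fin (n+2) → ι) = i :: List.ofFn g := by
          simp [List.ofFn_succ]
        have h2 : (∏ j, d ((Fin.cons i g : Fin (n+2) → ι) j)) = d i * ∏ t, d (g t) := by
          rw [Fin.prod_univ_succ]
          simp
        show (Nlist N zero (List.ofFn (Fin.cons i g : Fin (n+2) → ι)) k : ℝ) *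
            ∏ j, d ((Fin.cons i g : Fin (n+2) → ι) j) = _
        rw [h1, h2, show Nlist N zero (i :: List.ofFn g) k
              = ∑ j, Nlist N zero (List.ofFn g) j * N i j k from rfl]
        push_cast
        rw [Finset.sum_mul]
        refine Finset.sum_congr rfl fun j _ => by ring
      calc ∑ i, ∑ g : Fin (n+1) → ι,
            (Nlist N zero (List.ofFn (Fin.consEquiv (fun _ : Fin (n+2) => ι) (i, g))) k : ℝ) *
              ∏ j, d ((Fin.consEquiv (fun _ : Fin (n+2) => ι) (i, g)) j)
          = ∑ i, ∑ j, (∑ g : Fin (n+1) → ι,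
              (Nlist N zero (List.ofFn g) j : ℝ) * ∏ t, d (g t)) * ((N i j k : ℝ) * d i) := by
            refine Finset.sum_congr rfl fun i _ => ?_
            rw [Finset.sum_congr rfl fun g _ => step i g, Finset.sum_comm]
            exact Finset.sum_congr rfl fun j _ => (Finset.sum_mul _ _ _).symm
        _ = ∑ i, ∑ j, ((∑ i', d i' ^ 2) ^ n * d j) * ((N i j k : ℝ) * d i) := by
            refine Finset.sum_congr rfl fun i _ => Finset.sum_congr rfl fun j _ => by rw [ih j]
        _ = (∑ i', d i' ^ 2) ^ n * ∑ i, d i * ∑ j, (N i j k : ℝ) * d j := by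
            rw [Finset.mul_sum]
            refine Finset.sum_congr rfl fun i _ => ?_
            rw [Finset.mul_sum, Finset.mul_sum]
            refine Finset.sum_congr rfl fun j _ => by ring
        _ = (∑ i', d i' ^ 2) ^ n * ∑ i, d i * (d i * d k) := by
            congr 1
            exact Finset.sum_congr rfl fun i _ => by rw [hkey i k]
        _ = (∑ i, d i ^ 2) ^ (n+1) * d k := by
            rw [pow_succ, mul_assoc]
            congr 1
            rw [Finset.sum_mul]
            exact Finset.sum_congr rfl fun i _ => by ring
  intro n hn
  obtain ⟨m, rfl⟩ := Nat.exists_eq_add_of_le hn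
  rw [show 1 + m = m + 1 from by ring] at *
  rw [main m zero, hd0, mul_one]
  simp
end

section
/- Let M be a von Neumann algebra acting on a Hilbert space H, let L ⊆ M be a σ-weakly dense *-subalgebra, and let J ⊆ L be a right ideal of L. If π is a bounded *-representation of L on a Hilbert space K such that π restricted to J is σ-weakly continuous (on bounded sets) and π(J)K is dense in K, then π is σ-weakly continuous on the unit ball of L; hence for any bounded net a_i in L with a_i → 0 σ-weakly, every σ-weak limit point t of π(a_i) satisfies t·π(h) = 0 for all h ∈ J, and therefore t = 0. -/
/-!
If `h ∈ J`, then `h * a_i ∈ J` is a bounded net tending to `0`, so `π h * π a_i → 0`; since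
multiplication by `π h` is WOT-continuous, `π h * t` is a cluster point of the same net, hence
`π h * t = 0`. Every vector `t w` is therefore killed by `π(J)`. As `J` is a right ideal,
`π(h h*) = π h (π h)†` also kills it, so `(π h)† (t w) = 0`, i.e. `t w` is orthogonal to
`π(J) K`, which is dense; thus `t = 0`.
-/

open Filter Topology ContinuousLinearMapWOT

theorem MapClusterPt.eq_of_tendsto {α X : Type*} [TopologicalSpace X] [T2Space X]
    {F : Filter α} {u : α → X} {x y : X} (hx : MapClusterPt x F u) (hy : Tendsto u F (𝓝 y)) :
    x = y :=
  eq_of_nhds_neBot (hx.clusterPt.mono hy)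

namespace StarAlgHom

variable {𝕜 A K : Type*} [RCLike 𝕜] [Semiring A] [Algebra 𝕜 A] [Star A]
  [NormedAddCommGroup K] [InnerProductSpace 𝕜 K] [CompleteSpace K]

theorem adjoint_apply_eq_zero_of_map_mul_star_apply_eq_zero (π : A →⋆ₐ[𝕜] (K →L[𝕜] K))
    {h : A} {u : K} (hu : π (h * star h) u = 0) : ContinuousLinearMap.adjoint (π h) u = 0 := by
  have hker : u ∈ ((π h ∘L ContinuousLinearMap.adjoint (π h) : K →L[𝕜] K) : K →ₗ[𝕜] K).ker := by
    simpa [map_mul, map_star, ContinuousLinearMap.star_eq_adjoint] using hu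
  rwa [ContinuousLinearMap.ker_self_comp_adjoint] at hker

theorem eq_zero_of_forall_map_apply_eq_zero (π : A →⋆ₐ[𝕜] (K →L[𝕜] K)) {J : Set A}
    (hJ : ∀ h ∈ J, h * star h ∈ J)
    (hdense : Dense (Submodule.span 𝕜 {y : K | ∃ x ∈ J, ∃ v : K, y = π x v} : Set K))
    {u : K} (hu : ∀ h ∈ J, π h u = 0) : u = 0 := by
  have hperp : Submodule.span 𝕜 {y : K | ∃ x ∈ J, ∃ v : K, y = π x v} ≤ (𝕜 ∙ u)ᗮ := by
    rw [Submodule.span_le]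
    rintro _ ⟨h, hh, v, rfl⟩
    rw [SetLike.mem_coe, Submodule.mem_orthogonal_singleton_iff_inner_right,
      ← ContinuousLinearMap.adjoint_inner_left,
      adjoint_apply_eq_zero_of_map_mul_star_apply_eq_zero π (hu _ (hJ h hh)), inner_zero_left]
  exact hdense.eq_zero_of_inner_left 𝕜 fun v hv ↦
    Submodule.mem_orthogonal_singleton_iff_inner_right.mp (hperp hv)

end StarAlgHom

theorem rep_continuous_of_ideal_continuous_nondegenerate_general
    {H K : Type*}
    [NormedAddCommGroup H] [InnerProductSpace ℂ H] [CompleteSpace H]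
    [NormedAddCommGroup K] [InnerProductSpace ℂ K] [CompleteSpace K]
    (L : StarSubalgebra ℂ (H →L[ℂ] H))
    (J : Set L)
    (hJideal : ∀ x ∈ J, ∀ a : L, x * a ∈ J)
    (π : L →⋆ₐ[ℂ] (K →L[ℂ] K))
    -- `π` restricted to `J` is σ-weakly continuous on bounded nets:
    (hJcont : ∀ {ι' : Type} (l : Filter ι') (b : ι' → L), (∀ i, b i ∈ J) →
      (∃ C : ℝ, ∀ i, ‖(b i : H →L[ℂ] H)‖ ≤ C) →
      Tendsto (fun i => ContinuousLinearMapWOT.ofCLM (σ := RingHom.id ℂ) (E := H) (F := H) (b i : H →L[ℂ] H)) l (𝓝 0) →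
      Tendsto (fun i => ContinuousLinearMapWOT.ofCLM (σ := RingHom.id ℂ) (E := K) (F := K) (π (b i))) l (𝓝 0))
    -- nondegeneracy: `π(J)K` spans a dense subspace of `K`:
    (hnondeg : Dense (Submodule.span ℂ {y : K | ∃ x ∈ J, ∃ v : K, y = π x v} : Set K)) :
    ∀ {ι' : Type} (l : Filter ι') [l.NeBot] (a : ι' → L) (C : ℝ),
      (∀ i, ‖(a i : H →L[ℂ] H)‖ ≤ C) →
      Tendsto (fun i => ContinuousLinearMapWOT.ofCLM (σ := RingHom.id ℂ) (E := H) (F := H) (a i : H →L[ℂ] H)) l (𝓝 0) →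
      ∀ t : K →L[ℂ] K,
        MapClusterPt (ContinuousLinearMapWOT.ofCLM (σ := RingHom.id ℂ) (E := K) (F := K) t) l
          (fun i => ContinuousLinearMapWOT.ofCLM (σ := RingHom.id ℂ) (E := K) (F := K) (π (a i))) →
        (∀ h ∈ J, t * π h = 0) ∧ t = 0 := by
  intro ι' l _ a C hC htend t ht
  have hJt : ∀ k ∈ J, π k * t = 0 := by
    intro k hk
    have hka : Tendsto (fun i ↦ ofCLM ((k * a i : L) : H →L[ℂ] H)) l (𝓝 0) := by
      simpa using htend.const_mul (ofCLM (k : H →L[ℂ] H))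
    have hka_bdd : ∃ C' : ℝ, ∀ i, ‖((k * a i : L) : H →L[ℂ] H)‖ ≤ C' :=
      ⟨‖(k : H →L[ℂ] H)‖ * C, fun i ↦ (norm_mul_le _ _).trans (by gcongr; exact hC i)⟩
    have hcluster : MapClusterPt (ofCLM (π k * t)) l (fun i ↦ ofCLM (π (k * a i))) := by
      simpa [Function.comp_def] using
        ht.continuousAt_comp (continuous_const_mul (ofCLM (π k))).continuousAt
    exact ofCLM_injective <|
      hcluster.eq_of_tendsto (hJcont l _ (fun i ↦ hJideal k hk (a i)) hka_bdd hka)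
  have ht0 : t = 0 := by
    ext w
    refine π.eq_zero_of_forall_map_apply_eq_zero (fun h hh ↦ hJideal h hh (star h)) hnondeg
      fun k hk ↦ ?_
    simpa using congr($(hJt k hk) w)
  exact ⟨fun h _ ↦ by rw [ht0, zero_mul], ht0⟩

/-- Let `M` be a von Neumann algebra on a Hilbert space `H`, `L ⊆ M` a
σ-weakly dense *-subalgebra, and `J ⊆ L` a right ideal of `L`. If `π` is a bounded
*-representation of `L` on a Hilbert space `K` whose restriction to `J` is σ-weakly continuous
on bounded sets and which is nondegenerate on `J` (i.e. `π(J)K` spans a dense subspace of `K`),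
then `π` is σ-weakly continuous on the unit ball of `L`: for any bounded net `a_i` in `L` with
`a_i → 0` σ-weakly, every σ-weak limit point `t` of `π(a_i)` satisfies `t · π(h) = 0` for all
`h ∈ J`, and therefore `t = 0`.  (On bounded sets the σ-weak topology coincides with the weak
operator topology, which is used here to express σ-weak convergence of bounded nets.) -/
theorem rep_continuous_of_ideal_continuous_nondegenerate
    {H K : Type*}
    [NormedAddCommGroup H] [InnerProductSpace ℂ H] [CompleteSpace H]
    [NormedAddCommGroup K] [InnerProductSpace ℂ K] [CompleteSpace K]
    (M : VonNeumannAlgebra H)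
    (L : StarSubalgebra ℂ (H →L[ℂ] H))
    (hLM : (L : Set (H →L[ℂ] H)) ⊆ M)
    -- σ-weak density of `L` in `M` (expressed via the weak operator topology on the type copy):
    (hdense : ∀ T ∈ M, ContinuousLinearMapWOT.ofCLM (σ := RingHom.id ℂ) (E := H) (F := H) T ∈ closure
      ((fun x : H →L[ℂ] H => ContinuousLinearMapWOT.ofCLM (σ := RingHom.id ℂ) (E := H) (F := H) x) '' (L : Set (H →L[ℂ] H))))
    (J : Set L)
    (hJadd : ∀ x ∈ J, ∀ y ∈ J, x + y ∈ J)
    (hJsmul : ∀ (c : ℂ), ∀ x ∈ J, c • x ∈ J)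
    (hJideal : ∀ x ∈ J, ∀ a : L, x * a ∈ J)
    (π : L →⋆ₐ[ℂ] (K →L[ℂ] K))
    -- `π` restricted to `J` is σ-weakly continuous on bounded nets:
    (hJcont : ∀ {ι' : Type} (l : Filter ι') (b : ι' → L), (∀ i, b i ∈ J) →
      (∃ C : ℝ, ∀ i, ‖(b i : H →L[ℂ] H)‖ ≤ C) →
      Tendsto (fun i => ContinuousLinearMapWOT.ofCLM (σ := RingHom.id ℂ) (E := H) (F := H) (b i : H →L[ℂ] H)) l (𝓝 0) →
      Tendsto (fun i => ContinuousLinearMapWOT.ofCLM (σ := RingHom.id ℂ) (E := K) (F := K) (π (b i))) l (𝓝 0))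
    -- nondegeneracy: `π(J)K` spans a dense subspace of `K`:
    (hnondeg : Dense (Submodule.span ℂ {y : K | ∃ x ∈ J, ∃ v : K, y = π x v} : Set K)) :
    ∀ {ι' : Type} (l : Filter ι') [l.NeBot] (a : ι' → L) (C : ℝ),
      (∀ i, ‖(a i : H →L[ℂ] H)‖ ≤ C) →
      Tendsto (fun i => ContinuousLinearMapWOT.ofCLM (σ := RingHom.id ℂ) (E := H) (F := H) (a i : H →L[ℂ] H)) l (𝓝 0) →
      ∀ t : K →L[ℂ] K,
        MapClusterPt (ContinuousLinearMapWOT.ofCLM (σ := RingHom.id ℂ) (E := K) (F := K) t) l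
          (fun i => ContinuousLinearMapWOT.ofCLM (σ := RingHom.id ℂ) (E := K) (F := K) (π (a i))) →
        (∀ h ∈ J, t * π h = 0) ∧ t = 0 :=
  rep_continuous_of_ideal_continuous_nondegenerate_general L J hJideal π hJcont hnondeg
end

section
/- Let (N_i)_{i∈ℕ} and (M_i)_{i∈ℕ} be decreasing sequences of von Neumann algebras on a Hilbert space with N_i ⊆ M_i for all i, N = ⋂_i N_i, M = ⋂_i M_i, and suppose for each i there is a conditional expectation E_i : M_i → N_i satisfying the Pimsner–Popa bound E_i(x) ≥ λ_i x for all x ∈ (M_i)_+ with λ_i⁻¹ = [M_i : N_i]_{E_i}. Then [M : N] ≤ liminf_{i→∞} [M_i : N_i], where [M : N] denotes the minimal index; in particular, any weak limit point E of the restrictions E_i|_M is a conditional expectation from M onto N satisfying E(x) ≥ λ x for every λ⁻¹ > liminf_i [M_i : N_i]. -/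
open Filter

variable {H : Type*} [NormedAddCommGroup H] [InnerProductSpace ℂ H] [CompleteSpace H]

/-- `E` is a conditional expectation from (the subset) `Mc` onto `Nc`. -/
def IsCondExpectation (Nc Mc : Set (H →L[ℂ] H))
    (E : (H →L[ℂ] H) →ₗ[ℂ] (H →L[ℂ] H)) : Prop :=
  (∀ x ∈ Mc, E x ∈ Nc) ∧ (∀ x ∈ Nc, E x = x) ∧
    (∀ x ∈ Mc, ContinuousLinearMap.IsPositive x → ContinuousLinearMap.IsPositive (E x))

/-- The Pimsner–Popa bound: `E x ≥ lam • x` for every positive `x ∈ Mc`. -/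
def PimsnerPopaBound (Mc : Set (H →L[ℂ] H))
    (E : (H →L[ℂ] H) →ₗ[ℂ] (H →L[ℂ] H)) (lam : ℝ) : Prop :=
  ∀ x ∈ Mc, ContinuousLinearMap.IsPositive x →
    ContinuousLinearMap.IsPositive (E x - (lam : ℂ) • x)

/-- The minimal index `[M : N] = inf_E [M : N]_E` of an inclusion `Nc ⊆ Mc`, where
`[M : N]_E = λ⁻¹` with `λ` the best Pimsner–Popa constant for the expectation `E`. -/
noncomputable def minIndex (Nc Mc : Set (H →L[ℂ] H)) : ℝ :=
  sInf {c : ℝ | 1 ≤ c ∧ ∃ E : (H →L[ℂ] H) →ₗ[ℂ] (H →L[ℂ] H),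
    IsCondExpectation Nc Mc E ∧ PimsnerPopaBound Mc E c⁻¹}

/-!
The restrictions of the `E i` to `M = ⋂ M i` are uniformly bounded: a unital linear map that is
positive on a C⋆-subalgebra has norm at most `2` there (split into real and imaginary parts, each
squeezed between `±‖a‖`). Bounded sets of operators are compact in the weak operator topology, so
the `E i` have a WOT limit `F` along an ultrafilter on which `idx i → liminf idx`. Von Neumann
algebras (being double commutants) and the positive cone are WOT-closed, hence `F` maps `M` into
every `N j`, fixes `N`, is positive, and satisfies the Pimsner–Popa bound with constant
`(liminf idx)⁻¹`.
-/

open Topology ComplexStarModule ContinuousLinearMapWOT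

section CStarAlgebra

variable {A : Type*} [CStarAlgebra A]

theorem norm_realPart_le (a : A) : ‖(ℜ a : A)‖ ≤ ‖a‖ := by
  rw [realPart_apply_coe, norm_smul]
  calc ‖(2⁻¹ : ℝ)‖ * ‖a + star a‖ ≤ 2⁻¹ * (‖a‖ + ‖star a‖) := by
        rw [Real.norm_of_nonneg (by norm_num)]; gcongr; exact norm_add_le _ _
    _ = ‖a‖ := by rw [norm_star]; ring

theorem norm_imaginaryPart_le (a : A) : ‖(ℑ a : A)‖ ≤ ‖a‖ := by
  calc ‖(ℑ a : A)‖ = ‖(ℜ (Complex.I • a) : A)‖ := by simp [realPart_I_smul]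
    _ ≤ ‖Complex.I • a‖ := norm_realPart_le _
    _ = ‖a‖ := by simp [norm_smul]

theorem StarSubalgebra.realPart_mem (S : StarSubalgebra ℂ A) {a : A} (ha : a ∈ S) :
    (ℜ a : A) ∈ S := by
  rw [realPart_apply_coe, ← Complex.coe_smul]
  exact S.smul_mem (add_mem ha (star_mem ha)) _

variable [PartialOrder A] [StarOrderedRing A]

theorem CStarAlgebra.norm_le_of_mem_Icc {a : A} {r : ℝ} (hr : 0 ≤ r)
    (ha : a ∈ Set.Icc (-algebraMap ℝ A r) (algebraMap ℝ A r)) : ‖a‖ ≤ r := by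
  rcases subsingleton_or_nontrivial A with hA | hA
  · simp [Subsingleton.elim a 0, hr]
  have hsa : IsSelfAdjoint a := by
    simpa using (IsSelfAdjoint.algebraMap A (IsSelfAdjoint.all r)).sub
      (IsSelfAdjoint.of_nonneg (sub_nonneg.2 ha.2))
  have hle : ∀ x ∈ spectrum ℝ a, x ≤ r := (le_algebraMap_iff_spectrum_le hsa).1 ha.2
  have hge : ∀ x ∈ spectrum ℝ a, -r ≤ x :=
    (algebraMap_le_iff_le_spectrum hsa).1 (by simpa using ha.1)
  rcases CStarAlgebra.norm_or_neg_norm_mem_spectrum hsa with h | h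
  · exact hle _ h
  · linarith [hge _ h]

variable {S : StarSubalgebra ℂ A} {Φ : A →ₗ[ℂ] A}

theorem norm_apply_le_of_isSelfAdjoint (hΦ1 : Φ 1 = 1) (hΦ : ∀ x ∈ S, 0 ≤ x → 0 ≤ Φ x)
    {a : A} (haS : a ∈ S) (ha : IsSelfAdjoint a) : ‖Φ a‖ ≤ ‖a‖ := by
  have hΦr : Φ (algebraMap ℝ A ‖a‖) = algebraMap ℝ A ‖a‖ := by
    rw [Algebra.algebraMap_eq_smul_one, Φ.map_smul_of_tower, hΦ1]
  have hrS : algebraMap ℝ A ‖a‖ ∈ S := by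
    rw [Algebra.algebraMap_eq_smul_one, ← Complex.coe_smul]
    exact S.smul_mem (one_mem S) _
  have hupper := hΦ _ (sub_mem hrS haS) (sub_nonneg.2 ha.le_algebraMap_norm_self)
  have hlower := hΦ _ (add_mem hrS haS) (neg_le_iff_add_nonneg'.1 ha.neg_algebraMap_norm_le_self)
  rw [map_sub, hΦr, sub_nonneg] at hupper
  rw [map_add, hΦr] at hlower
  exact CStarAlgebra.norm_le_of_mem_Icc (norm_nonneg a) ⟨neg_le_iff_add_nonneg'.2 hlower, hupper⟩

theorem norm_apply_le_two_mul (hΦ1 : Φ 1 = 1) (hΦ : ∀ x ∈ S, 0 ≤ x → 0 ≤ Φ x)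
    {x : A} (hx : x ∈ S) : ‖Φ x‖ ≤ 2 * ‖x‖ := by
  have hre : (ℜ x : A) ∈ S := S.realPart_mem hx
  have him : (ℑ x : A) ∈ S := by
    simpa [realPart_I_smul] using neg_mem (S.realPart_mem (S.smul_mem hx Complex.I))
  calc ‖Φ x‖ = ‖Φ (ℜ x) + Complex.I • Φ (ℑ x)‖ := by
        rw [← map_smul, ← map_add, realPart_add_I_smul_imaginaryPart]
    _ ≤ ‖Φ (ℜ x)‖ + ‖Φ (ℑ x)‖ := by
        simpa [norm_smul] using norm_add_le _ (Complex.I • Φ (ℑ x))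
    _ ≤ ‖(ℜ x : A)‖ + ‖(ℑ x : A)‖ := by
        gcongr
        · exact norm_apply_le_of_isSelfAdjoint hΦ1 hΦ hre (ℜ x).2
        · exact norm_apply_le_of_isSelfAdjoint hΦ1 hΦ him (ℑ x).2
    _ ≤ 2 * ‖x‖ := by linarith [norm_realPart_le x, norm_imaginaryPart_le x]

end CStarAlgebra

section WeakOperatorTopology

variable {𝕜 E F : Type*} [RCLike 𝕜] [NormedAddCommGroup F] [InnerProductSpace 𝕜 F]
  [CompleteSpace F]

theorem exists_norm_le_tendsto_inner_of_norm_le {α : Type*} (𝒰 : Ultrafilter α) {f : α → F}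
    {C : ℝ} (hf : ∀ a, ‖f a‖ ≤ C) :
    ∃ v : F, ‖v‖ ≤ C ∧ ∀ z, Tendsto (fun a => inner 𝕜 z (f a)) 𝒰 (𝓝 (inner 𝕜 z v)) := by
  -- Banach–Alaoglu in the dual, transported to `F` by the Riesz isomorphism.
  let φ : α → WeakDual 𝕜 F := fun a => StrongDual.toWeakDual (InnerProductSpace.toDual 𝕜 F (f a))
  have hball : (𝒰.map φ : Filter (WeakDual 𝕜 F)) ≤
      𝓟 (WeakDual.toStrongDual ⁻¹' Metric.closedBall 0 C) := by
    rw [Ultrafilter.coe_map, le_principal_iff]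
    exact mem_map.2 (univ_mem' fun a => by simpa [φ] using hf a)
  obtain ⟨ψ, hψC, hψ⟩ := (WeakDual.isCompact_closedBall 0 C).ultrafilter_le_nhds _ hball
  refine ⟨(InnerProductSpace.toDual 𝕜 F).symm (WeakDual.toStrongDual ψ), by simpa using hψC,
    fun z => ?_⟩
  have := (((WeakDual.eval_continuous z).tendsto ψ).comp (hψ : Tendsto φ 𝒰 (𝓝 ψ))).star
  rw [← inner_conj_symm, InnerProductSpace.toDual_symm_apply]
  simpa [φ] using this

theorem ContinuousLinearMapWOT.isClosed_setOf_isPositive :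
    IsClosed {T : F →WOT[𝕜] F | (toCLM T).IsPositive} := by
  simp only [ContinuousLinearMap.isPositive_def', ContinuousLinearMap.reApplyInnerSelf,
    Set.ofPred_and, Set.ofPred_forall]
  refine IsClosed.inter ?_ (isClosed_iInter fun x => isClosed_le continuous_const ?_)
  · have hsa : {T : F →WOT[𝕜] F | IsSelfAdjoint T.toCLM} = {T | star T = T} :=
      Set.ext fun T => toCLM_injective.eq_iff (a := star T) (b := T)
    exact hsa ▸ isClosed_eq continuous_star continuous_id
  · have hinner : Continuous fun T : F →WOT[𝕜] F => inner 𝕜 x (T x) :=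
      continuous_inner_apply continuous_id x x
    exact (RCLike.continuous_re.comp hinner).congr fun T => inner_re_symm _ _

variable [NormedAddCommGroup E] [NormedSpace 𝕜 E]

theorem ContinuousLinearMapWOT.exists_tendsto_ofCLM_of_norm_le {α : Type*} (𝒰 : Ultrafilter α)
    {T : α → E →L[𝕜] F} {C : ℝ} (hT : ∀ a, ‖T a‖ ≤ C) :
    ∃ S : E →L[𝕜] F, Tendsto (fun a => ofCLM (T a)) 𝒰 (𝓝 (ofCLM S)) := by
  choose v hvC hv using fun y => exists_norm_le_tendsto_inner_of_norm_le (𝕜 := 𝕜) 𝒰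
    (f := fun a => T a y) fun a => (T a).le_of_opNorm_le (hT a) y
  let S : E →ₗ[𝕜] F :=
    { toFun := v
      map_add' := fun y₁ y₂ => ext_inner_left 𝕜 fun z => tendsto_nhds_unique (hv (y₁ + y₂) z) <| by
        simpa only [map_add, inner_add_right] using (hv y₁ z).add (hv y₂ z)
      map_smul' := fun c y => ext_inner_left 𝕜 fun z => tendsto_nhds_unique (hv (c • y) z) <| by
        simpa only [map_smul, inner_smul_right, RingHom.id_apply] using (hv y z).const_mul c }
  exact ⟨S.mkContinuous C hvC, tendsto_iff_forall_inner_apply_tendsto.2 fun y z => hv y z⟩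

theorem exists_linearMap_tendsto_ofCLM {α X : Type*} [AddCommGroup X] [Module 𝕜 X]
    (𝒰 : Ultrafilter α) (P : Submodule 𝕜 X) (g : α → X →ₗ[𝕜] E →L[𝕜] F)
    (hg : ∀ x ∈ P, ∃ C, ∀ a, ‖g a x‖ ≤ C) :
    ∃ L : X →ₗ[𝕜] E →L[𝕜] F, ∀ x ∈ P,
      Tendsto (fun a => ofCLM (g a x)) 𝒰 (𝓝 (ofCLM (L x))) := by
  have hlim (x : P) : ∃ S, Tendsto (fun a => ofCLM (g a x)) 𝒰 (𝓝 (ofCLM S)) := by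
    obtain ⟨C, hC⟩ := hg x x.2
    exact exists_tendsto_ofCLM_of_norm_le 𝒰 hC
  choose S hS using hlim
  let L' := linearMapOfTendsto (fun x => ofCLM (S x))
    (fun a => (linearEquiv 𝕜).symm.toLinearMap ∘ₗ g a ∘ₗ P.subtype) (tendsto_pi_nhds.2 hS)
  obtain ⟨L, hL⟩ := LinearMap.exists_extend ((linearEquiv 𝕜).toLinearMap ∘ₗ L')
  refine ⟨L, fun x hx => ?_⟩
  convert hS ⟨x, hx⟩
  exact congr($hL ⟨x, hx⟩)

end WeakOperatorTopology

theorem VonNeumannAlgebra.isClosed_toCLM_preimage (S : VonNeumannAlgebra H) :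
    IsClosed (toCLM ⁻¹' (S : Set (H →L[ℂ] H)) : Set (H →WOT[ℂ] H)) := by
  have hpre (X : Set (H →L[ℂ] H)) : toCLM ⁻¹' X.centralizer = (toCLM ⁻¹' X).centralizer :=
    Set.ext fun T => ⟨fun h m hm => toCLM_injective (h _ hm),
      fun h m hm => congrArg toCLM (h (ofCLM m) hm)⟩
  rw [← S.centralizer_centralizer, hpre]
  exact Set.isClosed_centralizer _

theorem IsCondExpectation.norm_apply_le {Nc : Set (H →L[ℂ] H)} {S : StarSubalgebra ℂ (H →L[ℂ] H)}
    {E : (H →L[ℂ] H) →ₗ[ℂ] (H →L[ℂ] H)} (hE : IsCondExpectation Nc S E) (h1 : 1 ∈ Nc)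
    {x : H →L[ℂ] H} (hx : x ∈ S) : ‖E x‖ ≤ 2 * ‖x‖ :=
  norm_apply_le_two_mul (hE.2.1 1 h1) (fun y hy hy0 =>
    (ContinuousLinearMap.nonneg_iff_isPositive _).2
      (hE.2.2 y hy ((ContinuousLinearMap.nonneg_iff_isPositive y).1 hy0))) hx

theorem exists_isCondExpectation_pimsnerPopaBound_of_tendsto {ι : Type*} [Preorder ι]
    (N M : ι → VonNeumannAlgebra H) (hNM : ∀ i, (N i : Set (H →L[ℂ] H)) ⊆ M i)
    (hN : Antitone fun i => (N i : Set (H →L[ℂ] H)))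
    (E : ι → (H →L[ℂ] H) →ₗ[ℂ] (H →L[ℂ] H))
    (hE : ∀ i, IsCondExpectation (N i : Set (H →L[ℂ] H)) (M i) (E i))
    {lam : ι → ℝ} (hPP : ∀ i, PimsnerPopaBound (M i : Set (H →L[ℂ] H)) (E i) (lam i))
    (𝒰 : Ultrafilter ι) (h𝒰 : (𝒰 : Filter ι) ≤ atTop) {c : ℝ} (hc : Tendsto lam 𝒰 (𝓝 c)) :
    ∃ F, IsCondExpectation (⋂ i, (N i : Set (H →L[ℂ] H))) (⋂ i, (M i : Set (H →L[ℂ] H))) F ∧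
      PimsnerPopaBound (⋂ i, (M i : Set (H →L[ℂ] H))) F c := by
  let P : Submodule ℂ (H →L[ℂ] H) := ⨅ i, Subalgebra.toSubmodule (M i).toSubalgebra
  have hP : ∀ x, x ∈ P ↔ x ∈ ⋂ i, (M i : Set (H →L[ℂ] H)) := fun x => by
    simp [P, Submodule.mem_iInf]
  obtain ⟨F, hF⟩ := exists_linearMap_tendsto_ofCLM 𝒰 P E fun x hx =>
    ⟨2 * ‖x‖, fun i => (hE i).norm_apply_le (one_mem (N i)) (Set.mem_iInter.1 ((hP x).1 hx) i)⟩
  replace hF : ∀ x ∈ ⋂ i, (M i : Set (H →L[ℂ] H)),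
      Tendsto (fun i => ofCLM (E i x)) 𝒰 (𝓝 (ofCLM (F x))) := fun x hx => hF x ((hP x).2 hx)
  have hMi {x} (hx : x ∈ ⋂ i, (M i : Set (H →L[ℂ] H))) (i : ι) : x ∈ M i := Set.mem_iInter.1 hx i
  refine ⟨F, ⟨fun x hx => ?range, fun x hx => ?fixed, fun x hx hpos => ?positive⟩,
    fun x hx hpos => ?bound⟩
  case range =>
    refine Set.mem_iInter.2 fun j => (N j).isClosed_toCLM_preimage.mem_of_tendsto (hF x hx) ?_
    filter_upwards [h𝒰 (eventually_ge_atTop j)] with i hji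
    exact hN hji ((hE i).1 x (hMi hx i))
  case fixed =>
    have hconst : Tendsto (fun i => ofCLM (E i x)) 𝒰 (𝓝 (ofCLM x)) :=
      tendsto_const_nhds.congr fun i => congrArg ofCLM ((hE i).2.1 x (Set.mem_iInter.1 hx i)).symm
    exact congrArg toCLM (tendsto_nhds_unique (hF x (Set.iInter_mono hNM hx)) hconst)
  case positive =>
    exact isClosed_setOf_isPositive.mem_of_tendsto (hF x hx)
      (Eventually.of_forall fun i => (hE i).2.2 x (hMi hx i) hpos)
  case bound =>
    have hlam : Tendsto (fun i => (lam i : ℂ)) 𝒰 (𝓝 (c : ℂ)) :=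
      (Complex.continuous_ofReal.tendsto c).comp hc
    have hlim := (hF x hx).sub (hlam.smul_const (ofCLM x))
    exact isClosed_setOf_isPositive.mem_of_tendsto hlim
      (Eventually.of_forall fun i => hPP i x (hMi hx i) hpos)

theorem minIndex_le_liminf_of_decreasing_general
    (N M : ℕ → VonNeumannAlgebra H)
    (hNM : ∀ i, (N i : Set (H →L[ℂ] H)) ⊆ (M i : Set (H →L[ℂ] H)))
    (hNdec : ∀ i, (N (i + 1) : Set (H →L[ℂ] H)) ⊆ (N i : Set (H →L[ℂ] H)))
    (E : ℕ → ((H →L[ℂ] H) →ₗ[ℂ] (H →L[ℂ] H)))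
    (idx : ℕ → ℝ)
    (hidx1 : ∀ i, 1 ≤ idx i)
    (hbdd : IsBoundedUnder (· ≤ ·) atTop idx)
    (hE : ∀ i, IsCondExpectation (N i : Set (H →L[ℂ] H)) (M i : Set (H →L[ℂ] H)) (E i))
    (hPP : ∀ i, PimsnerPopaBound (M i : Set (H →L[ℂ] H)) (E i) (idx i)⁻¹) :
    minIndex (⋂ i, (N i : Set (H →L[ℂ] H))) (⋂ i, (M i : Set (H →L[ℂ] H)))
      ≤ liminf idx atTop := by
  have hcob : IsCoboundedUnder (· ≥ ·) atTop idx := hbdd.isCoboundedUnder_ge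
  have hL : 1 ≤ liminf idx atTop := le_liminf_of_le hcob (Eventually.of_forall hidx1)
  obtain ⟨𝒰, h𝒰, hlim⟩ := mapClusterPt_iff_ultrafilter.1
    (MapClusterPt.liminf hcob (isBoundedUnder_of ⟨1, hidx1⟩))
  obtain ⟨F, hF, hFPP⟩ := exists_isCondExpectation_pimsnerPopaBound_of_tendsto N M hNM
    (antitone_nat_of_succ_le hNdec) E hE hPP 𝒰 h𝒰 (hlim.inv₀ (by linarith))
  exact csInf_le ⟨1, fun c hc => hc.1⟩ ⟨hL, F, hF, hFPP⟩

/-- Let `(N_i)` and `(M_i)` be decreasing sequences of von Neumann algebras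
with `N_i ⊆ M_i`, `N = ⋂ N_i`, `M = ⋂ M_i`, and suppose each inclusion `N_i ⊆ M_i` admits a
conditional expectation `E_i` with Pimsner–Popa bound `E_i(x) ≥ λ_i x`, `λ_i⁻¹ = [M_i:N_i]_{E_i}
= idx i`.  Then `[M : N] ≤ liminf_i [M_i : N_i]` (minimal index).  (We assume, as we may, that
the sequence of indices is bounded.) -/
theorem minIndex_le_liminf_of_decreasing
    (N M : ℕ → VonNeumannAlgebra H)
    (hNM : ∀ i, (N i : Set (H →L[ℂ] H)) ⊆ (M i : Set (H →L[ℂ] H)))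
    (hNdec : ∀ i, (N (i + 1) : Set (H →L[ℂ] H)) ⊆ (N i : Set (H →L[ℂ] H)))
    (hMdec : ∀ i, (M (i + 1) : Set (H →L[ℂ] H)) ⊆ (M i : Set (H →L[ℂ] H)))
    (E : ℕ → ((H →L[ℂ] H) →ₗ[ℂ] (H →L[ℂ] H)))
    (idx : ℕ → ℝ)
    (hidx1 : ∀ i, 1 ≤ idx i)
    (hbdd : IsBoundedUnder (· ≤ ·) atTop idx)
    (hE : ∀ i, IsCondExpectation (N i : Set (H →L[ℂ] H)) (M i : Set (H →L[ℂ] H)) (E i))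
    (hPP : ∀ i, PimsnerPopaBound (M i : Set (H →L[ℂ] H)) (E i) (idx i)⁻¹) :
    minIndex (⋂ i, (N i : Set (H →L[ℂ] H))) (⋂ i, (M i : Set (H →L[ℂ] H)))
      ≤ liminf idx atTop :=
  minIndex_le_liminf_of_decreasing_general N M hNM hNdec E idx hidx1 hbdd hE hPP
end

section
/- With the fusion rules of a rational system {ρ_i} and the LR inclusion as above: as (N⊗N^opp)-M sectors, [ρ_i ⊗ ρ_j^opp][γ] = Σ_k N_{i j̄}^k [ρ_k ⊗ id][γ], where N_{i j̄}^k is the structure constant ⟨ρ_k, ρ_i ρ_{j̄}⟩. -/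
open Finset

/-- In the fusion module of `(N⊗N^opp)`-`M` sectors of the LR inclusion
(`V` models formal sums of sectors, `act i j` the left action of `[ρ_i ⊗ ρ_j^opp]`, `g` the
canonical sector `[γ]`), one has
`[ρ_i ⊗ ρ_j^opp][γ] = Σ_k N_{i j̄}^k [ρ_k ⊗ id][γ]`,
where `N_{i j̄}^k = ⟨ρ_k, ρ_i ρ_{j̄}⟩`.  The hypotheses encode the fusion rules on the first
tensor leg, the tensor factorization `[ρ_i ⊗ ρ_j^opp] = [ρ_i ⊗ id][id ⊗ ρ_j^opp]`, and the
identity `[id ⊗ ρ̄_i^opp][γ] = [ρ_i ⊗ id][γ]` from the previous lemma. -/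
theorem LR_sector_fusion_decomposition
    {ι V : Type*} [Fintype ι] [AddCommMonoid V]
    (i₀ : ι) (bar : ι → ι) (hbar : Function.Involutive bar)
    (N : ι → ι → ι → ℕ)
    (act : ι → ι → V →+ V) (g : V)
    (hfus : ∀ i i' (v : V), act i i₀ (act i' i₀ v) = ∑ k, N i i' k • act k i₀ v)
    (hswap : ∀ i, act i₀ (bar i) g = act i i₀ g)
    (hsplit : ∀ i j, act i j g = act i i₀ (act i₀ j g))
    (i j : ι) :
    act i j g = ∑ k, N i (bar j) k • act k i₀ g := by
  have h : act i₀ j g = act (bar j) i₀ g := by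
    have := hswap (bar j); rwa [hbar j] at this
  rw [hsplit, h, hfus]
end
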